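/- L^r norms of complex Gaussians and their Fourier transforms: let a > b > 0 be reals and define f_{a,b}(x) = exp(−π (a + i b)² x²) (a Schwartz function since Re((a+ib)²) = a² − b² > 0). Then for every real 1 ≤ r < ∞: ‖f_{a,b}‖_r = (r (a² − b²))^(−1/(2r)) and ‖𝓕 f_{a,b}‖_r = (a² + b²)^(1/r − 1/2) * (r (a² − b²))^(−1/(2r)). Consequently, for reals 1 < p < q < ∞, ‖f_{a,b}‖_q ‖𝓕f_{a,b}‖_q / (‖f_{a,b}‖_p ‖𝓕f_{a,b}‖_p) = (p^(1/p)/q^(1/q)) * ((a² + b²)/(a² − b²))^(1/q − 1/p). -/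

import Mathlib

open MeasureTheory SchwartzMap

/-- The `L^r` norm of `f : ℝ → ℂ` with respect to Lebesgue measure. -/
noncomputable def Lnorm (r : ℝ) (f : ℝ → ℂ) : ℝ :=
  (∫ x : ℝ, ‖f x‖ ^ r) ^ (1 / r)

/-- The sup norm `‖f‖_∞ = sup_x |f x|`. -/
noncomputable def Lsup (f : ℝ → ℂ) : ℝ := ⨆ x : ℝ, ‖f x‖

/-- The Fourier transform `𝓕 f (ξ) = ∫ f x · e^{-2πi x ξ} dx`. -/
noncomputable def FT (f : ℝ → ℂ) : ℝ → ℂ := fun ξ =>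
  ∫ x : ℝ, f x * Complex.exp (-2 * Real.pi * Complex.I * x * ξ)

/-- The complex Gaussian `f_{a,b}(x) = exp(-π (a + i b)² x²)`. -/
noncomputable def fab (a b : ℝ) : ℝ → ℂ := fun x =>
  Complex.exp (-(Real.pi : ℂ) * ((a : ℂ) + (b : ℂ) * Complex.I) ^ 2 * (x : ℂ) ^ 2)

/-!
With c = (a + ib)², |f_{a,b}| is the real Gaussian exp(-π Re(c) x²), and 𝓕 f_{a,b} = c^{-1/2}
exp(-π ξ²/c) has modulus |c|^{-1/2} exp(-π (Re c / |c|²) ξ²), where Re c = a² - b² and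
|c| = a² + b². A function of modulus K exp(-π s x²) has L^r norm K (r s)^{-1/(2r)}, by the
Gaussian integral applied to |f|^r. The ratio formula is then rpow algebra.
-/

open Real FourierTransform

lemma FT_eq_fourier (f : ℝ → ℂ) : FT f = 𝓕 f := by
  ext ξ
  rw [FT, Real.fourier_real_eq_integral_exp_smul]
  congr 1 with x
  rw [smul_eq_mul, mul_comm]
  congr 2
  push_cast
  ring

lemma Lnorm_eq_of_norm_eq_gaussian {K s r : ℝ} (hK : 0 ≤ K) (hs : 0 < s) (hr : 0 < r)
    {f : ℝ → ℂ} (hf : ∀ x, ‖f x‖ = K * Real.exp (-(π * s) * x ^ 2)) :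
    Lnorm r f = K * (r * s) ^ (-(1 / (2 * r))) := by
  have hrs : 0 < r * s := mul_pos hr hs
  have hf_rpow : ∀ x : ℝ, ‖f x‖ ^ r = K ^ r * Real.exp (-(π * (r * s)) * x ^ 2) := by
    intro x
    rw [hf x, Real.mul_rpow hK (Real.exp_pos _).le, ← Real.exp_mul]
    ring_nf
  have hpi : π / (π * (r * s)) = (r * s)⁻¹ := by field_simp
  rw [Lnorm, funext hf_rpow, integral_const_mul, integral_gaussian, hpi, Real.sqrt_eq_rpow,
    Real.mul_rpow (by positivity) (by positivity), ← Real.rpow_mul hK, mul_one_div_cancel hr.ne',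
    Real.rpow_one, ← Real.rpow_neg_one, ← Real.rpow_mul hrs.le, ← Real.rpow_mul hrs.le]
  ring_nf

lemma norm_cexp_neg_pi_mul_sq (c : ℂ) (x : ℝ) :
    ‖Complex.exp (-π * c * x ^ 2)‖ = Real.exp (-(π * c.re) * x ^ 2) := by
  rw [Complex.norm_exp,
    show -(π : ℂ) * c * x ^ 2 = ((-π * x ^ 2 : ℝ) : ℂ) * c by push_cast; ring,
    Complex.re_ofReal_mul]
  ring_nf

lemma norm_fourier_cexp_neg_pi_mul_sq {c : ℂ} (hc : 0 < c.re) (ξ : ℝ) :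
    ‖𝓕 (fun x : ℝ => Complex.exp (-π * c * x ^ 2)) ξ‖
      = ‖c‖ ^ (-(1 / 2) : ℝ) * Real.exp (-(π * (c.re / ‖c‖ ^ 2)) * ξ ^ 2) := by
  rw [fourier_gaussian_pi hc, norm_mul, norm_div, norm_one, Complex.norm_exp,
    show (1 / 2 : ℂ) = ((1 / 2 : ℝ) : ℂ) by norm_num, Complex.norm_cpow_real,
    show -(π : ℂ) / c * ξ ^ 2 = ((-π * ξ ^ 2 : ℝ) : ℂ) * c⁻¹ by push_cast; field_simp,
    Complex.re_ofReal_mul, Complex.inv_re, Complex.normSq_eq_norm_sq, one_div,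
    ← Real.rpow_neg (norm_nonneg _)]
  ring_nf

lemma Lnorm_cexp_neg_pi_mul_sq {c : ℂ} (hc : 0 < c.re) {r : ℝ} (hr : 0 < r) :
    Lnorm r (fun x : ℝ => Complex.exp (-π * c * x ^ 2)) = (r * c.re) ^ (-(1 / (2 * r))) := by
  rw [Lnorm_eq_of_norm_eq_gaussian zero_le_one hc hr (by simpa using norm_cexp_neg_pi_mul_sq c),
    one_mul]

lemma Lnorm_fourier_cexp_neg_pi_mul_sq {c : ℂ} (hc : 0 < c.re) {r : ℝ} (hr : 0 < r) :
    Lnorm r (𝓕 fun x : ℝ => Complex.exp (-π * c * x ^ 2))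
      = ‖c‖ ^ (1 / r - 1 / 2) * (r * c.re) ^ (-(1 / (2 * r))) := by
  have hnorm : 0 < ‖c‖ := norm_pos_iff.mpr (by rintro rfl; simp at hc)
  rw [Lnorm_eq_of_norm_eq_gaussian (by positivity) (by positivity) hr
      (norm_fourier_cexp_neg_pi_mul_sq hc), mul_div_assoc',
    Real.div_rpow (by positivity) (by positivity),
    show 1 / r - 1 / 2 = -(1 / 2) - 2 * (-(1 / (2 * r))) by field_simp; ring,
    Real.rpow_sub hnorm, Real.rpow_mul hnorm.le, Real.rpow_two]
  ring

lemma re_ofReal_add_mul_I_sq (a b : ℝ) :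
    (((a : ℂ) + b * Complex.I) ^ 2).re = a ^ 2 - b ^ 2 := by
  simp [sq, Complex.mul_re]

lemma norm_ofReal_add_mul_I_sq (a b : ℝ) :
    ‖((a : ℂ) + b * Complex.I) ^ 2‖ = a ^ 2 + b ^ 2 := by
  rw [norm_pow, Complex.norm_def, Complex.normSq_add_mul_I, Real.sq_sqrt (by positivity)]

lemma gaussian_Lnorm_product_ratio {A M p q : ℝ} (hA : 0 < A) (hM : 0 < M) (hp : 0 < p)
    (hq : 0 < q) :
    (q * A) ^ (-(1 / (2 * q))) * (M ^ (1 / q - 1 / 2) * (q * A) ^ (-(1 / (2 * q))))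
        / ((p * A) ^ (-(1 / (2 * p))) * (M ^ (1 / p - 1 / 2) * (p * A) ^ (-(1 / (2 * p)))))
      = (p ^ (1 / p) / q ^ (1 / q)) * (M / A) ^ (1 / q - 1 / p) := by
  refine Real.log_injOn_pos (Set.mem_Ioi.mpr (by positivity)) (Set.mem_Ioi.mpr (by positivity)) ?_
  simp (disch := positivity) only [Real.log_mul, Real.log_div, Real.log_rpow]
  field_simp
  ring

/-- `L^r` norms of complex Gaussians and their Fourier transforms, and the
resulting value of the Wigderson-Wigderson functional. -/
theorem gaussian_Lnorms (a b : ℝ) (hb : 0 < b) (hba : b < a) :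
    (∀ r : ℝ, 1 ≤ r →
      Lnorm r (fab a b) = (r * (a ^ 2 - b ^ 2)) ^ (-(1 / (2 * r))) ∧
      Lnorm r (FT (fab a b)) =
        (a ^ 2 + b ^ 2) ^ (1 / r - 1 / 2) * (r * (a ^ 2 - b ^ 2)) ^ (-(1 / (2 * r)))) ∧
    (∀ p q : ℝ, 1 < p → p < q →
      Lnorm q (fab a b) * Lnorm q (FT (fab a b))
          / (Lnorm p (fab a b) * Lnorm p (FT (fab a b)))
        = (p ^ (1 / p) / q ^ (1 / q)) * ((a ^ 2 + b ^ 2) / (a ^ 2 - b ^ 2)) ^ (1 / q - 1 / p)) := by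
  have hA : 0 < a ^ 2 - b ^ 2 := by nlinarith
  have hre : 0 < (((a : ℂ) + b * Complex.I) ^ 2).re := re_ofReal_add_mul_I_sq a b ▸ hA
  have hfab : fab a b = fun x : ℝ => Complex.exp (-π * ((a : ℂ) + b * Complex.I) ^ 2 * x ^ 2) :=
    rfl
  have norms : ∀ r : ℝ, 1 ≤ r →
      Lnorm r (fab a b) = (r * (a ^ 2 - b ^ 2)) ^ (-(1 / (2 * r))) ∧
      Lnorm r (FT (fab a b)) =
        (a ^ 2 + b ^ 2) ^ (1 / r - 1 / 2) * (r * (a ^ 2 - b ^ 2)) ^ (-(1 / (2 * r))) := by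
    intro r hr
    rw [FT_eq_fourier, hfab, Lnorm_cexp_neg_pi_mul_sq hre (by linarith),
      Lnorm_fourier_cexp_neg_pi_mul_sq hre (by linarith), re_ofReal_add_mul_I_sq,
      norm_ofReal_add_mul_I_sq]
    exact ⟨rfl, rfl⟩
  refine ⟨norms, fun p q hp hpq => ?_⟩
  rw [(norms p hp.le).1, (norms p hp.le).2, (norms q (by linarith)).1, (norms q (by linarith)).2]
  exact gaussian_Lnorm_product_ratio hA (by positivity) (by linarith) (by linarith)
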